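/- Let W be an r × r lower triangular matrix with positive diagonal, Ω = W W^T, ω = v(W*) with W*_{ii} = log(W_{ii}) and W*_{ij} = W_{ij} for i ≠ j, and let D^W be the diagonal matrix of order r(r+1)/2 with diagonal v(J^W), where J^W_{ii} = W_{ii} and off-diagonal entries of J^W equal 1. Let u ∈ ℝ^r have i-th entry r − i + 2, let ν > r − 1 and let S be an r × r symmetric positive definite matrix. Then the gradient with respect to ω of the log induced Wishart prior density log p(ω) = ((ν−r−1)/2) log|Ω| − (1/2) tr(S^{−1} Ω) + Σ_{i=1}^r (r−i+2) log(W_{ii}) + const equals D^W v{ (ν−r−1) W^{−T} − S^{−1} W } + v(diag(u)). -/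

import Mathlib

open Matrix

/-- The continuous linear map `v ↦ a ⬝ᵥ v`. -/
noncomputable def dotCLM {ι : Type*} [Fintype ι] (a : ι → ℝ) : (ι → ℝ) →L[ℝ] ℝ :=
  LinearMap.toContinuousLinearMap
    { toFun := fun v => a ⬝ᵥ v
      map_add' := fun x y => dotProduct_add a x y
      map_smul' := fun c x => by simp [dotProduct_smul] }

/-- Index set of the lower-triangular positions of an `r × r` matrix
(the index set of the half-vectorization `v(·)`). -/
abbrev LTIdx (r : ℕ) := {q : Fin r × Fin r // q.2 ≤ q.1}

/-- The log-Cholesky parametrization `ω ↦ W`: `W` is lower triangular with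
`W_{ii} = exp(ω_{ii})` and `W_{ij} = ω_{ij}` for `j < i`. -/
noncomputable def Wof {r : ℕ} (ω : LTIdx r → ℝ) : Matrix (Fin r) (Fin r) ℝ :=
  fun i j => if h : j ≤ i then
      (if i = j then Real.exp (ω ⟨(i, j), h⟩) else ω ⟨(i, j), h⟩) else 0

/-!
In log-Cholesky coordinates `log |Ω| = 2 ∑ ωᵢᵢ` and `log Wᵢᵢ = ωᵢᵢ` are linear in `ω`, so only
`tr(S⁻¹ W Wᵀ)` needs differentiating: its differential is `∑ᵢⱼ ((S⁻¹ + S⁻ᵀ) W)ᵢⱼ dWᵢⱼ` and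
`dWᵢⱼ = J^W_ᵢⱼ dωᵢⱼ`. The term `(ν − r − 1) W⁻ᵀ` of the formula lives on the diagonal only,
because `W⁻¹` is lower triangular with `Wᵢᵢ (W⁻¹)ᵢᵢ = 1`.
-/

section dotCLM

variable {ι : Type*} [Fintype ι]

@[simp]
lemma dotCLM_apply (a v : ι → ℝ) : dotCLM a v = a ⬝ᵥ v := rfl

lemma dotCLM_add (a b : ι → ℝ) : dotCLM (a + b) = dotCLM a + dotCLM b := by
  ext v; simp [add_dotProduct]

lemma dotCLM_sub (a b : ι → ℝ) : dotCLM (a - b) = dotCLM a - dotCLM b := by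
  ext v; simp [sub_dotProduct]

lemma dotCLM_smul (c : ℝ) (a : ι → ℝ) : dotCLM (c • a) = c • dotCLM a := by
  ext v; simp [smul_dotProduct]

lemma dotCLM_sum {κ : Type*} (s : Finset κ) (a : κ → ι → ℝ) :
    dotCLM (∑ k ∈ s, a k) = ∑ k ∈ s, dotCLM (a k) := by
  ext v; simp [sum_dotProduct]

end dotCLM

namespace Matrix

variable {m R : Type*} [LinearOrder m] [Fintype m]

theorem IsLowerTriangular.mul_apply_self [NonUnitalNonAssocSemiring R] {M N : Matrix m m R}
    (hM : M.IsLowerTriangular) (hN : N.IsLowerTriangular) (i : m) :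
    (M * N) i i = M i i * N i i := by
  rw [mul_apply, Finset.sum_eq_single i]
  · intro k _ hk
    rcases hk.lt_or_gt with h | h
    · rw [hN (by simpa using h), mul_zero]
    · rw [hM (by simpa using h), zero_mul]
  · simp

theorem IsLowerTriangular.inv [DecidableEq m] [CommRing R] {M : Matrix m m R}
    (hM : M.IsLowerTriangular) : M⁻¹.IsLowerTriangular := by
  by_cases h : IsUnit M.det
  · have := M.invertibleOfIsUnitDet h
    exact blockTriangular_inv_of_blockTriangular hM
  · rw [nonsing_inv_apply_not_isUnit M h]
    exact blockTriangular_zero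

theorem IsLowerTriangular.apply_self_mul_inv_apply_self [DecidableEq m] [CommRing R]
    {M : Matrix m m R} (hM : M.IsLowerTriangular) (h : IsUnit M.det) (i : m) :
    M i i * M⁻¹ i i = 1 := by
  rw [← hM.mul_apply_self hM.inv, mul_nonsing_inv M h, one_apply_eq]

end Matrix

theorem hasFDerivAt_trace_mul_mul_transpose {E m n : Type*} [NormedAddCommGroup E]
    [NormedSpace ℝ E] [Fintype m] [Fintype n] (A : Matrix m m ℝ) {M : E → Matrix m n ℝ}
    {M' : m → n → E →L[ℝ] ℝ} {x : E} (hM : ∀ i j, HasFDerivAt (fun y => M y i j) (M' i j) x) :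
    HasFDerivAt (fun y => (A * (M y * (M y)ᵀ)).trace)
      (∑ i, ∑ j, ((A + Aᵀ) * M x) i j • M' i j) x := by
  have hAM : ∀ i j, HasFDerivAt (fun y => (A * M y) i j) (∑ k, A i k • M' k j) x := fun i j =>
    HasFDerivAt.fun_sum fun k _ => (hM k j).const_mul (A i k)
  have htrace : (fun y => (A * (M y * (M y)ᵀ)).trace)
      = fun y => ∑ i, ∑ j, (A * M y) i j * M y i j := by
    funext y
    rw [← Matrix.mul_assoc]
    simp [trace, mul_apply]
  rw [htrace]
  refine (HasFDerivAt.fun_sum fun i _ => HasFDerivAt.fun_sum fun j _ =>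
    (hAM i j).fun_mul (hM i j)).congr_fderiv ?_
  rw [Matrix.add_mul]
  simp only [Matrix.add_apply, add_smul, Finset.sum_add_distrib]
  congr 1
  simp only [mul_apply, transpose_apply, Finset.smul_sum, Finset.sum_smul, smul_smul]
  rw [Finset.sum_comm]
  conv_rhs => rw [Finset.sum_comm]
  refine Finset.sum_congr rfl fun j _ => ?_
  rw [Finset.sum_comm]
  simp only [mul_comm]

namespace LTIdx

variable {r : ℕ}

-- Zero above the diagonal, so that every entry of `Wof ω` is a function of `single i j ⬝ᵥ ω`.
def single (i j : Fin r) : LTIdx r → ℝ := fun q => if q.1 = (i, j) then 1 else 0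

lemma single_dotProduct (i j : Fin r) (ω : LTIdx r → ℝ) :
    single i j ⬝ᵥ ω = if h : j ≤ i then ω ⟨(i, j), h⟩ else 0 := by
  split_ifs with h
  · have hq (q : LTIdx r) : q.1 = (i, j) ↔ q = ⟨(i, j), h⟩ :=
      ⟨fun hq => Subtype.ext hq, fun hq => hq ▸ rfl⟩
    simp [dotProduct, single, hq]
  · refine Finset.sum_eq_zero fun ⟨(a, b), hba⟩ _ => ?_
    have hq : (a, b) ≠ (i, j) := by
      rintro ⟨⟩
      exact h hba
    simp [single, hq]

lemma sum_sum_smul_single (c : Fin r → Fin r → ℝ) :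
    ∑ i, ∑ j, c i j • single i j = fun q => c q.1.1 q.1.2 := by
  funext q
  simp [single, Prod.ext_iff, ite_and, Finset.sum_apply]

lemma sum_smul_single_self (c : Fin r → ℝ) :
    ∑ i, c i • single i i = fun q => if q.1.1 = q.1.2 then c q.1.1 else 0 := by
  funext q
  simp only [Finset.sum_apply, Pi.smul_apply, single, Prod.ext_iff, smul_eq_mul, mul_ite, mul_one,
    mul_zero, ite_and, Finset.sum_ite_eq, Finset.mem_univ, if_true]
  exact if_congr eq_comm rfl rfl

end LTIdx

open LTIdx

section Wof

variable {r : ℕ}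

lemma Wof_apply (ω : LTIdx r → ℝ) (i j : Fin r) :
    Wof ω i j = if i = j then Real.exp (single i j ⬝ᵥ ω) else single i j ⬝ᵥ ω := by
  rw [single_dotProduct, Wof]
  split_ifs with h hij <;> simp_all

lemma log_Wof_apply_self (ω : LTIdx r → ℝ) (i : Fin r) :
    Real.log (Wof ω i i) = single i i ⬝ᵥ ω := by
  simp [Wof_apply]

lemma Wof_isLowerTriangular (ω : LTIdx r → ℝ) : (Wof ω).IsLowerTriangular := by
  intro i j h
  simp [Wof, not_le.2 (by simpa using h : i < j)]

lemma det_Wof (ω : LTIdx r → ℝ) : (Wof ω).det = Real.exp (∑ i, single i i ⬝ᵥ ω) := by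
  rw [det_of_isLowerTriangular _ (Wof_isLowerTriangular ω), Real.exp_sum]
  simp [Wof_apply]

lemma isUnit_det_Wof (ω : LTIdx r → ℝ) : IsUnit (Wof ω).det := by
  rw [det_Wof]
  exact (Real.exp_pos _).ne'.isUnit

lemma log_det_Wof_mul_transpose (ω : LTIdx r → ℝ) :
    Real.log (Wof ω * (Wof ω)ᵀ).det = 2 * ∑ i, single i i ⬝ᵥ ω := by
  rw [det_mul, det_transpose, det_Wof, ← Real.exp_add, Real.log_exp]
  ring

lemma hasFDerivAt_log_Wof_apply_self (ω₀ : LTIdx r → ℝ) (i : Fin r) :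
    HasFDerivAt (fun ω => Real.log (Wof ω i i)) (dotCLM (single i i)) ω₀ := by
  simp only [log_Wof_apply_self]
  exact (dotCLM (single i i)).hasFDerivAt

lemma hasFDerivAt_log_det_Wof_mul_transpose (ω₀ : LTIdx r → ℝ) :
    HasFDerivAt (fun ω => Real.log (Wof ω * (Wof ω)ᵀ).det)
      (dotCLM fun q => if q.1.1 = q.1.2 then 2 else 0) ω₀ := by
  simp only [log_det_Wof_mul_transpose]
  have hsum := HasFDerivAt.fun_sum (u := Finset.univ) fun (i : Fin r) _ =>
    (dotCLM (single i i)).hasFDerivAt (x := ω₀)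
  refine (hsum.const_mul 2).congr_fderiv ?_
  simp only [Finset.smul_sum, ← dotCLM_smul, ← dotCLM_sum, sum_smul_single_self]

/-- The matrix `J^W` of the paper. -/
noncomputable def logCholeskyJac (ω : LTIdx r → ℝ) : Matrix (Fin r) (Fin r) ℝ :=
  fun i j => if i = j then Wof ω i i else 1

lemma hasFDerivAt_Wof_apply (ω₀ : LTIdx r → ℝ) (i j : Fin r) :
    HasFDerivAt (fun ω => Wof ω i j) (logCholeskyJac ω₀ i j • dotCLM (single i j)) ω₀ := by
  simp only [Wof_apply, logCholeskyJac]
  split_ifs with hij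
  · subst hij
    exact (dotCLM (single i i)).hasFDerivAt.exp
  · rw [one_smul]
    exact (dotCLM (single i j)).hasFDerivAt

lemma hasFDerivAt_trace_mul_Wof_mul_transpose (A : Matrix (Fin r) (Fin r) ℝ)
    (ω₀ : LTIdx r → ℝ) :
    HasFDerivAt (fun ω => (A * (Wof ω * (Wof ω)ᵀ)).trace)
      (dotCLM fun q => ((A + Aᵀ) * Wof ω₀) q.1.1 q.1.2 * logCholeskyJac ω₀ q.1.1 q.1.2) ω₀ := by
  refine (hasFDerivAt_trace_mul_mul_transpose A (hasFDerivAt_Wof_apply ω₀)).congr_fderiv ?_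
  simp only [smul_smul, ← dotCLM_smul, ← dotCLM_sum, sum_sum_smul_single]

lemma logCholeskyJac_mul_inv_apply (ω : LTIdx r → ℝ) {i j : Fin r} (hji : j ≤ i) :
    logCholeskyJac ω i j * (Wof ω)⁻¹ j i = if i = j then 1 else 0 := by
  have hW := Wof_isLowerTriangular ω
  by_cases hij : i = j
  · subst hij
    simpa [logCholeskyJac] using hW.apply_self_mul_inv_apply_self (isUnit_det_Wof ω) i
  · have hinv : (Wof ω)⁻¹ j i = 0 := hW.inv (by simpa using lt_of_le_of_ne hji (Ne.symm hij))
    simp [hij, hinv]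

end Wof

/-- The paper's `uᵢ = r − i + 2` appears as `r − j + 1` for the 0-based index `j = i − 1`. -/
theorem gradient_log_wishart_prior_logCholesky_general
    (r : ℕ) (ν : ℝ)
    (S : Matrix (Fin r) (Fin r) ℝ) (hSsym : Sᵀ = S)
    (c : ℝ) (ω0 : LTIdx r → ℝ) :
    HasFDerivAt
      (fun ω : LTIdx r → ℝ =>
        ((ν - r - 1) / 2) * Real.log ((Wof ω * (Wof ω)ᵀ).det)
          - (1 / 2) * (S⁻¹ * (Wof ω * (Wof ω)ᵀ)).trace
          + ∑ j : Fin r, ((r : ℝ) - (j : ℕ) + 1) * Real.log (Wof ω j j)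
          + c)
      (dotCLM (fun q : LTIdx r =>
        (if q.1.1 = q.1.2 then Wof ω0 q.1.1 q.1.1 else 1) *
            (((ν - r - 1) • ((Wof ω0)⁻¹)ᵀ - S⁻¹ * Wof ω0) q.1.1 q.1.2)
          + (if q.1.1 = q.1.2 then (r : ℝ) - (q.1.1 : ℕ) + 1 else 0)))
      ω0 := by
  have hSinv : S⁻¹ + (S⁻¹)ᵀ = (2 : ℝ) • S⁻¹ := by
    rw [transpose_nonsing_inv, hSsym, two_smul]
  have hlogdet := (hasFDerivAt_log_det_Wof_mul_transpose ω0).const_mul ((ν - r - 1) / 2)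
  have htrace := (hasFDerivAt_trace_mul_Wof_mul_transpose S⁻¹ ω0).const_mul (1 / 2 : ℝ)
  have hlogdiag := HasFDerivAt.fun_sum (u := Finset.univ) fun j _ =>
    (hasFDerivAt_log_Wof_apply_self ω0 j).const_mul ((r : ℝ) - (j : ℕ) + 1)
  refine (((hlogdet.sub htrace).add hlogdiag).add_const c).congr_fderiv ?_
  simp only [← dotCLM_smul, ← dotCLM_sum, ← dotCLM_add, ← dotCLM_sub, sum_smul_single_self, hSinv]
  congr 1
  funext ⟨⟨i, j⟩, hji⟩
  have hJ := logCholeskyJac_mul_inv_apply ω0 hji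
  simp only [Pi.add_apply, Pi.sub_apply, Pi.smul_apply, Matrix.sub_apply, Matrix.smul_apply,
    transpose_apply, smul_mul, smul_eq_mul, logCholeskyJac] at hJ ⊢
  split_ifs at hJ ⊢ <;> linear_combination (r + 1 - ν) * hJ

/-- **Gradient of the log induced Wishart prior density in the log-Cholesky
parametrization.** With `Ω = WWᵀ`, `ν > r − 1`, `S` symmetric positive definite, and
`u_i = r − i + 2` (for `i = 1, …, r`; here `u j = r − j + 1` for the 0-based index `j`),
the gradient with respect to `ω` of
`log p(ω) = ((ν−r−1)/2) log|Ω| − (1/2) tr(S⁻¹Ω) + Σᵢ (r−i+2) log W_{ii} + const`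
equals `D^W v{(ν−r−1) W^{−T} − S⁻¹ W} + v(diag u)`. -/
theorem gradient_log_wishart_prior_logCholesky
    (r : ℕ) (ν : ℝ) (hν : (r : ℝ) - 1 < ν)
    (S : Matrix (Fin r) (Fin r) ℝ) (hSsym : Sᵀ = S) (hS : S.PosDef)
    (c : ℝ) (ω0 : LTIdx r → ℝ) :
    HasFDerivAt
      (fun ω : LTIdx r → ℝ =>
        ((ν - r - 1) / 2) * Real.log ((Wof ω * (Wof ω)ᵀ).det)
          - (1 / 2) * (S⁻¹ * (Wof ω * (Wof ω)ᵀ)).trace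
          + ∑ j : Fin r, ((r : ℝ) - (j : ℕ) + 1) * Real.log (Wof ω j j)
          + c)
      (dotCLM (fun q : LTIdx r =>
        (if q.1.1 = q.1.2 then Wof ω0 q.1.1 q.1.1 else 1) *
            (((ν - r - 1) • ((Wof ω0)⁻¹)ᵀ - S⁻¹ * Wof ω0) q.1.1 q.1.2)
          + (if q.1.1 = q.1.2 then (r : ℝ) - (q.1.1 : ℕ) + 1 else 0)))
      ω0 :=
  gradient_log_wishart_prior_logCholesky_general r ν S hSsym c ω0
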